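/- arXiv:2603.09539 — 3 statements merged into one kernel-verified Lean document; each statement's English description precedes it below -/
import Mathlib

section
/- For the 2×2 coordination game with diagonal payoff matrix [[s,0],[0,t]] with s > t > 0, and for any η > 0, the quantity x₁* = (1 + e^{−s/η}) / (1 + e^{−(s−t)/η} + 2 e^{−s/η}) satisfies x₁* ∈ (1/2, 1), and x₁* → 1 as η → 0⁺. -/
open Filter Real Topology

lemma tendsto_exp_neg_div_nhdsGT_zero {c : ℝ} (hc : 0 < c) :
    Tendsto (fun η : ℝ => exp (-c / η)) (𝓝[>] 0) (𝓝 0) := by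
  have h : Tendsto (fun η : ℝ => -c / η) (𝓝[>] 0) atBot := by
    simpa only [div_eq_mul_inv] using
      tendsto_inv_nhdsGT_zero.const_mul_atTop_of_neg (neg_neg_of_pos hc)
  exact tendsto_exp_atBot.comp h

lemma one_add_div_one_add_add_two_mul_mem_Ioo {a b : ℝ} (ha : 0 < a) (hb₀ : 0 ≤ b)
    (hb₁ : b < 1) : (1 + a) / (1 + b + 2 * a) ∈ Set.Ioo (1 / 2 : ℝ) 1 := by
  have hden : 0 < 1 + b + 2 * a := by positivity
  constructor
  · rw [div_lt_div_iff₀ two_pos hden]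
    linarith
  · rw [div_lt_one hden]
    linarith

theorem stmt_3 (s t : ℝ) (ht : 0 < t) (hst : t < s) :
    (∀ η : ℝ, 0 < η →
      (1 + Real.exp (-s/η)) / (1 + Real.exp (-(s-t)/η) + 2 * Real.exp (-s/η))
        ∈ Set.Ioo (1/2 : ℝ) 1) ∧
    Tendsto
      (fun η : ℝ =>
        (1 + Real.exp (-s/η)) / (1 + Real.exp (-(s-t)/η) + 2 * Real.exp (-s/η)))
      (nhdsWithin 0 (Set.Ioi 0)) (nhds 1) := by
  have hst' : 0 < s - t := sub_pos.mpr hst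
  refine ⟨fun η hη => ?_, ?_⟩
  · have hb : exp (-(s - t) / η) < 1 :=
      exp_lt_one_iff.mpr (div_neg_of_neg_of_pos (neg_neg_of_pos hst') hη)
    exact one_add_div_one_add_add_two_mul_mem_Ioo (exp_pos _) (exp_pos _).le hb
  · have ha := tendsto_exp_neg_div_nhdsGT_zero (ht.trans hst)
    have hb := tendsto_exp_neg_div_nhdsGT_zero hst'
    have hlim := ((tendsto_const_nhds (x := (1 : ℝ))).add ha).div
      (((tendsto_const_nhds (x := (1 : ℝ))).add hb).add (ha.const_mul 2)) (by norm_num)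
    simpa [Pi.div_def] using hlim
end

section
/- Let F : ℝ^n → ℝ^n be twice differentiable, η > 0, P_i(x) = exp(F_i(x)/η)/∑_j exp(F_j(x)/η), and R_i(x) = ∇F_i(x) − ∑_l P_l(x)∇F_l(x). Then the Hessian of P_i satisfies: Hess P_i(x) = η^{−2} P_i(x) · (R_i R_i^⊤ − ∑_l P_l R_l R_l^⊤) + η^{−1} P_i(x) · (Hess F_i(x) − ∑_l P_l(x) Hess F_l(x)). -/
/-!
The gradient of the softmax weight `P_i` is `η⁻¹ P_i R_i`, where `R_i` is `∇F_i` minus its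
`P`-weighted mean; since `∑ P_l = 1`, the `P`-weighted mean of the `R_l` vanishes. Differentiating
`η⁻¹ P_i R_i` once more by the product rule gives the curvature term
`η⁻¹ P_i (Hess F_i - ∑ P_l Hess F_l)` and a term `∑ (∂_y P_l) ∇F_l = η⁻¹ ∑ P_l ⟪R_l, y⟫ ∇F_l`,
in which `∇F_l` may be replaced by `R_l` exactly because `∑ P_l ⟪R_l, y⟫ = 0`.
-/

open Finset RealInnerProductSpace

/-- The Hessian of a scalar function, as the derivative of its gradient field. -/
noncomputable def hess {n : ℕ} (f : EuclideanSpace ℝ (Fin n) → ℝ)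
    (x : EuclideanSpace ℝ (Fin n)) : EuclideanSpace ℝ (Fin n) →L[ℝ] EuclideanSpace ℝ (Fin n) :=
  fderiv ℝ (fun y => gradient f y) x

noncomputable def softmax {ι : Type*} [Fintype ι] (η : ℝ) (v : ι → ℝ) (i : ι) : ℝ :=
  Real.exp (v i / η) / ∑ j, Real.exp (v j / η)

section Centering

variable {ι M : Type*} [Fintype ι] [AddCommGroup M] [Module ℝ M] {p : ι → ℝ}

theorem sum_smul_sub_sum_smul_eq_zero (hp : ∑ l, p l = 1) (v : ι → M) :
    ∑ l, p l • (v l - ∑ m, p m • v m) = 0 := by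
  simp only [smul_sub, sum_sub_distrib, ← sum_smul, hp, one_smul, sub_self]

theorem sum_mul_smul_eq_sum_mul_smul_sub_sum_smul {s : ι → ℝ} (hs : ∑ l, p l * s l = 0)
    (v : ι → M) : ∑ l, (p l * s l) • v l = ∑ l, (p l * s l) • (v l - ∑ m, p m • v m) := by
  simp only [smul_sub, sum_sub_distrib, ← sum_smul, hs, zero_smul, sub_zero]

end Centering

section Softmax

variable {ι : Type*} [Fintype ι]

theorem sum_exp_div_pos {η : ℝ} (v : ι → ℝ) (i : ι) : 0 < ∑ j, Real.exp (v j / η) :=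
  sum_pos (fun _ _ => Real.exp_pos _) ⟨i, mem_univ i⟩

theorem sum_softmax [Nonempty ι] (η : ℝ) (v : ι → ℝ) : ∑ i, softmax η v i = 1 := by
  obtain ⟨i⟩ := ‹Nonempty ι›
  simp only [softmax]
  rw [← sum_div, div_self (sum_exp_div_pos v i).ne']

variable {E : Type*} [NormedAddCommGroup E] [NormedSpace ℝ E]

theorem hasFDerivAt_softmax {η : ℝ} {F : E → ι → ℝ} {F' : ι → E →L[ℝ] ℝ} {x : E}
    (hF : ∀ j, HasFDerivAt (fun w => F w j) (F' j) x) (i : ι) :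
    HasFDerivAt (fun w => softmax η (F w) i)
      ((η⁻¹ * softmax η (F x) i) • (F' i - ∑ m, softmax η (F x) m • F' m)) x := by
  have hexp : ∀ j, HasFDerivAt (fun w => Real.exp (F w j / η))
      ((η⁻¹ * Real.exp (F x j / η)) • F' j) x := fun j => by
    simpa only [div_eq_mul_inv, smul_smul, mul_comm] using ((hF j).mul_const η⁻¹).exp
  have hS := (sum_exp_div_pos (η := η) (F x) i).ne'
  have hinv := (hasDerivAt_inv hS).comp_hasFDerivAt x (HasFDerivAt.fun_sum fun j _ => hexp j)
  refine ((hexp i).mul hinv).congr_fderiv ?_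
  have hmean : ∀ c : ℝ, ∑ m, (c * Real.exp (F x m / η)) • F' m
      = c • ∑ m, Real.exp (F x m / η) • F' m := fun c => by simp only [smul_sum, smul_smul]
  simp only [softmax, Function.comp_apply, div_eq_inv_mul _ (∑ j, Real.exp (F x j / η)), hmean]
  match_scalars <;> field_simp

end Softmax

section Residual

variable {ι E : Type*} [Fintype ι] [NormedAddCommGroup E] [InnerProductSpace ℝ E] [CompleteSpace E]
  {η : ℝ} {F : E → ι → ℝ} {x : E}

theorem ContDiff.differentiable_gradient {f : E → ℝ} (hf : ContDiff ℝ 2 f) :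
    Differentiable ℝ (gradient f) :=
  ((InnerProductSpace.toDual ℝ E).symm.toContinuousLinearEquiv.contDiff.comp
    (hf.fderiv_right (m := 1) le_rfl)).differentiable one_ne_zero

noncomputable def softmaxResidual (η : ℝ) (F : E → ι → ℝ) (x : E) (i : ι) : E :=
  gradient (fun w => F w i) x - ∑ l, softmax η (F x) l • gradient (fun w => F w l) x

theorem hasGradientAt_softmax (hF : ∀ j, DifferentiableAt ℝ (fun w => F w j) x) (i : ι) :
    HasGradientAt (fun w => softmax η (F w) i)
      ((η⁻¹ * softmax η (F x) i) • softmaxResidual η F x i) x := by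
  rw [hasGradientAt_iff_hasFDerivAt]
  simpa only [softmaxResidual, map_smul, map_sub, map_sum, toDual_gradient] using
    hasFDerivAt_softmax (fun j => (hF j).hasFDerivAt) i

theorem sum_softmax_smul_softmaxResidual [Nonempty ι] (η : ℝ) (F : E → ι → ℝ) (x : E) :
    ∑ l, softmax η (F x) l • softmaxResidual η F x l = 0 :=
  sum_smul_sub_sum_smul_eq_zero (sum_softmax η (F x)) _

theorem differentiableAt_softmaxResidual (hF : ∀ j, DifferentiableAt ℝ (fun w => F w j) x)
    (hgF : ∀ j, DifferentiableAt ℝ (gradient fun w => F w j) x) (i : ι) :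
    DifferentiableAt ℝ (fun w => softmaxResidual η F w i) x :=
  (hgF i).sub (DifferentiableAt.fun_sum fun l _ =>
    (hasGradientAt_softmax hF l).differentiableAt.smul (hgF l))

theorem fderiv_softmaxResidual_apply (hF : ∀ j, DifferentiableAt ℝ (fun w => F w j) x)
    (hgF : ∀ j, DifferentiableAt ℝ (gradient fun w => F w j) x) (i : ι) (y : E) :
    fderiv ℝ (fun w => softmaxResidual η F w i) x y
      = fderiv ℝ (gradient fun w => F w i) x y
        - ∑ l, softmax η (F x) l • fderiv ℝ (gradient fun w => F w l) x y
        - η⁻¹ • ∑ l, softmax η (F x) l •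
            (⟪softmaxResidual η F x l, y⟫ • softmaxResidual η F x l) := by
  have hp := fun l => (hasGradientAt_softmax (η := η) hF l).hasFDerivAt
  have hg := fun j => (hgF j).hasFDerivAt
  have hR : HasFDerivAt (fun w => softmaxResidual η F w i) _ x :=
    (hg i).fun_sub (HasFDerivAt.fun_sum fun l _ => (hp l).fun_smul (hg l))
  rw [hR.fderiv]
  have : Nonempty ι := ⟨i⟩
  have hs : ∑ l, softmax η (F x) l * ⟪softmaxResidual η F x l, y⟫ = 0 := by
    simp only [← real_inner_smul_left, ← sum_inner, sum_softmax_smul_softmaxResidual,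
      inner_zero_left]
  simp only [sub_apply, _root_.sum_apply, add_apply, smul_apply,
    ContinuousLinearMap.smulRight_apply, InnerProductSpace.toDual_apply_apply, real_inner_smul_left, sum_add_distrib, smul_smul]
  simp only [mul_assoc η⁻¹, ← smul_smul η⁻¹, ← smul_sum]
  rw [sum_mul_smul_eq_sum_mul_smul_sub_sum_smul hs, sub_sub]
  rfl

theorem fderiv_gradient_softmax_apply (hF : ∀ j, Differentiable ℝ (fun w => F w j))
    (hgF : ∀ j, DifferentiableAt ℝ (gradient fun w => F w j) x) (i : ι) (y : E) :
    fderiv ℝ (gradient fun w => softmax η (F w) i) x y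
      = (η⁻¹ ^ 2 * softmax η (F x) i) •
          (⟪softmaxResidual η F x i, y⟫ • softmaxResidual η F x i
            - ∑ l, softmax η (F x) l • (⟪softmaxResidual η F x l, y⟫ • softmaxResidual η F x l))
        + (η⁻¹ * softmax η (F x) i) •
          (fderiv ℝ (gradient fun w => F w i) x y
            - ∑ l, softmax η (F x) l • fderiv ℝ (gradient fun w => F w l) x y) := by
  have hgrad : (gradient fun w => softmax η (F w) i)
      = fun w => (η⁻¹ * softmax η (F w) i) • softmaxResidual η F w i :=
    funext fun w => (hasGradientAt_softmax (fun j => hF j w) i).gradient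
  have hp := ((hasGradientAt_softmax (η := η) (fun j => hF j x) i).hasFDerivAt).const_mul η⁻¹
  have hR := (differentiableAt_softmaxResidual (η := η) (fun j => hF j x) hgF i).hasFDerivAt
  rw [hgrad, (hp.fun_smul hR).fderiv]
  simp only [add_apply, smul_apply, ContinuousLinearMap.smulRight_apply,
    InnerProductSpace.toDual_apply_apply, real_inner_smul_left,
    fderiv_softmaxResidual_apply (fun j => hF j x) hgF]
  module

end Residual

theorem stmt_7_general (n : ℕ) (η : ℝ)
    (F : EuclideanSpace ℝ (Fin n) → Fin n → ℝ)
    (hF : ∀ i, ContDiff ℝ 2 (fun x => F x i))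
    (P : EuclideanSpace ℝ (Fin n) → Fin n → ℝ)
    (hP : ∀ x i, P x i = Real.exp (F x i / η) / ∑ j, Real.exp (F x j / η))
    (R : EuclideanSpace ℝ (Fin n) → Fin n → EuclideanSpace ℝ (Fin n))
    (hR : ∀ x i, R x i
      = gradient (fun y => F y i) x - ∑ l, P x l • gradient (fun y => F y l) x)
    (x y : EuclideanSpace ℝ (Fin n)) (i : Fin n) :
    hess (fun z => P z i) x y
      = (η⁻¹ ^ 2 * P x i) •
          (⟪R x i, y⟫ • R x i - ∑ l, P x l • (⟪R x l, y⟫ • R x l))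
        + (η⁻¹ * P x i) •
          (hess (fun z => F z i) x y - ∑ l, P x l • hess (fun z => F z l) x y) := by
  obtain rfl : P = fun z => softmax η (F z) := funext fun z => funext (hP z)
  obtain rfl : R = softmaxResidual η F := funext fun z => funext (hR z)
  exact fderiv_gradient_softmax_apply (fun j => (hF j).differentiable two_ne_zero)
    (fun j => (hF j).differentiable_gradient x) i y

theorem stmt_7 (n : ℕ) (η : ℝ) (hη : 0 < η)
    (F : EuclideanSpace ℝ (Fin n) → Fin n → ℝ)
    (hF : ∀ i, ContDiff ℝ 2 (fun x => F x i))
    (P : EuclideanSpace ℝ (Fin n) → Fin n → ℝ)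
    (hP : ∀ x i, P x i = Real.exp (F x i / η) / ∑ j, Real.exp (F x j / η))
    (R : EuclideanSpace ℝ (Fin n) → Fin n → EuclideanSpace ℝ (Fin n))
    (hR : ∀ x i, R x i
      = gradient (fun y => F y i) x - ∑ l, P x l • gradient (fun y => F y l) x)
    (x y : EuclideanSpace ℝ (Fin n)) (i : Fin n) :
    hess (fun z => P z i) x y
      = (η⁻¹ ^ 2 * P x i) •
          (⟪R x i, y⟫ • R x i - ∑ l, P x l • (⟪R x l, y⟫ • R x l))
        + (η⁻¹ * P x i) •
          (hess (fun z => F z i) x y - ∑ l, P x l • hess (fun z => F z l) x y) :=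
  stmt_7_general n η F hF P hP R hR x y i
end

section
/- Consider a two-action population game on the simplex X with continuous payoffs F̃₁, F̃₂ and the perturbed potential f(x₁) = ∫₀^{x₁}(F̃₁(t,1−t) − F̃₂(t,1−t))dt − η(x₁ log x₁ + (1−x₁)log(1−x₁)) for η > 0. Then any stationary point of f on [0,1] lies in the open interval (0,1), and x₁ ∈ (0,1) is a stationary point of f if and only if x₁ = exp(F̃₁(x)/η)/(exp(F̃₁(x)/η) + exp(F̃₂(x)/η)) where x = (x₁, 1−x₁); i.e., stationary points coincide with fixed points of the η-logit choice rule for F̃. -/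
open Real

/-!
Writing `φ t = F̃₁(t, 1 - t) - F̃₂(t, 1 - t)`, the perturbed potential is
`f = ∫₀^y φ + η · binEntropy`. The integral is differentiable everywhere, while the binary entropy
is not differentiable at `0` and `1`, so `f` has no derivative at all at the boundary points.
In the interior `f' = φ + η (log (1 - x₁) - log x₁)`, which vanishes exactly when the log-odds
`log (x₁ / (1 - x₁))` equal `(F̃₁ - F̃₂) / η`, i.e. at a fixed point of the logit choice rule.
-/

lemma binEntropy_eq_neg_mul_log_sub_mul_log (p : ℝ) :
    binEntropy p = -p * log p - (1 - p) * log (1 - p) := by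
  simp only [binEntropy, log_inv]
  ring

lemma ne_zero_and_ne_one_of_differentiableAt_add_const_mul_binEntropy {g : ℝ → ℝ} {η x : ℝ}
    (hη : η ≠ 0) (hg : DifferentiableAt ℝ g x)
    (h : DifferentiableAt ℝ (fun y => g y + η * binEntropy y) x) : x ≠ 0 ∧ x ≠ 1 := by
  rw [hg.fun_add_iff_right] at h
  have h' : DifferentiableAt ℝ (fun y => η⁻¹ * (η * binEntropy y)) x := h.const_mul η⁻¹
  simp only [inv_mul_cancel_left₀ hη] at h'
  exact differentiableAt_binEntropy_iff_ne_zero_one.1 h'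

lemma eq_exp_div_exp_add_exp_iff {x a b : ℝ} (h0 : 0 < x) (h1 : x < 1) :
    x = exp a / (exp a + exp b) ↔ log x - log (1 - x) = a - b := by
  have hpos : 0 < exp a + exp b := by positivity
  conv_rhs => rw [← exp_eq_exp]
  rw [exp_sub, exp_sub, exp_log h0, exp_log (sub_pos.2 h1), eq_div_iff hpos.ne',
    div_eq_div_iff (sub_pos.2 h1).ne' (exp_pos b).ne']
  constructor <;> intro h <;> linarith

theorem stmt_19 (η : ℝ) (hη : 0 < η)
    (Ft₁ Ft₂ : ℝ × ℝ → ℝ) (hF₁ : Continuous Ft₁) (hF₂ : Continuous Ft₂)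
    (f : ℝ → ℝ)
    (hf : ∀ y : ℝ, f y =
      (∫ t in (0:ℝ)..y, (Ft₁ (t, 1 - t) - Ft₂ (t, 1 - t)))
        - η * (y * Real.log y + (1 - y) * Real.log (1 - y))) :
    (∀ x₁ ∈ Set.Icc (0:ℝ) 1, HasDerivAt f 0 x₁ → x₁ ∈ Set.Ioo (0:ℝ) 1) ∧
    (∀ x₁ ∈ Set.Ioo (0:ℝ) 1,
      (HasDerivAt f 0 x₁ ↔
        x₁ = Real.exp (Ft₁ (x₁, 1 - x₁) / η) /
          (Real.exp (Ft₁ (x₁, 1 - x₁) / η) + Real.exp (Ft₂ (x₁, 1 - x₁) / η)))) := by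
  have hφ : Continuous fun t : ℝ => Ft₁ (t, 1 - t) - Ft₂ (t, 1 - t) := by fun_prop
  have hint (x : ℝ) := (hφ.integral_hasStrictDerivAt 0 x).hasDerivAt
  obtain rfl : f = fun y => (∫ t in (0:ℝ)..y, (Ft₁ (t, 1 - t) - Ft₂ (t, 1 - t)))
      + η * binEntropy y := by
    funext y
    rw [hf, binEntropy_eq_neg_mul_log_sub_mul_log]
    ring
  refine ⟨fun x hx hdx => ?_, fun x ⟨h0, h1⟩ => ?_⟩
  · obtain ⟨hx0, hx1⟩ := ne_zero_and_ne_one_of_differentiableAt_add_const_mul_binEntropy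
      hη.ne' (hint x).differentiableAt hdx.differentiableAt
    exact ⟨hx.1.lt_of_ne' hx0, hx.2.lt_of_ne hx1⟩
  · have hdf := (hint x).add ((hasDerivAt_binEntropy h0.ne' h1.ne).const_mul η)
    rw [eq_exp_div_exp_add_exp_iff h0 h1, ← sub_div, eq_div_iff hη.ne']
    exact ⟨fun h => by linarith [hdf.unique h], fun h => hdf.congr_deriv (by linarith)⟩
end
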